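/- arXiv:1305.3375 — 4 statements merged into one kernel-verified Lean document; each statement's English description precedes it below -/
import Mathlib

section
/- For D₁, D₂ ∈ (0,1) and D₁₂ with 0 < D₁₂ ≤ D₁₂^max = D₁D₂/(D₁+D₂−D₁D₂), the quantity γ = (1−D₁₂)[(D₁−D₁₂)(D₂−D₁₂) + D₁₂D₁D₂ − D₁₂²] is nonnegative. -/
theorem gamma_nonneg (D₁ D₂ D₁₂ : ℝ) (h₁ : D₁ ∈ Set.Ioo (0:ℝ) 1) (h₂ : D₂ ∈ Set.Ioo (0:ℝ) 1)
    (h₁₂pos : 0 < D₁₂) (h₁₂le : D₁₂ ≤ D₁ * D₂ / (D₁ + D₂ - D₁ * D₂)) :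
    0 ≤ (1 - D₁₂) * ((D₁ - D₁₂) * (D₂ - D₁₂) + D₁₂ * D₁ * D₂ - D₁₂ ^ 2) := by
  obtain ⟨h1a, h1b⟩ := h₁
  obtain ⟨h2a, h2b⟩ := h₂
  have hs : 0 < D₁ + D₂ - D₁ * D₂ := by nlinarith
  have hkey : D₁₂ * (D₁ + D₂ - D₁ * D₂) ≤ D₁ * D₂ := by
    have := (le_div_iff₀ hs).mp h₁₂le
    linarith
  have h12lt1 : D₁₂ ≤ 1 := by nlinarith
  nlinarith [mul_pos h1a h2a]
end

section
/- For D₁, D₂ ∈ (0,1) and 0 < D₁₂ ≤ D₁₂^max = D₁D₂/(D₁+D₂−D₁D₂) with D₁₂ ≥ D₁ + D₂ − 1, the quantity ρ₁₂* = −(√(πD₁₂² + γ) − √(πD₁₂²))/((1−D₁₂)√(D₁D₂)), where π = (1−D₁)(1−D₂) and γ = (1−D₁₂)[(D₁−D₁₂)(D₂−D₁₂) + D₁₂D₁D₂ − D₁₂²], satisfies −1 < ρ₁₂* ≤ 0. -/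
theorem rho_star_mem_Ioc (D₁ D₂ D₁₂ : ℝ) (h₁ : D₁ ∈ Set.Ioo (0:ℝ) 1) (h₂ : D₂ ∈ Set.Ioo (0:ℝ) 1)
    (h₁₂pos : 0 < D₁₂) (h₁₂le : D₁₂ ≤ D₁ * D₂ / (D₁ + D₂ - D₁ * D₂))
    (hnd : D₁ + D₂ - 1 ≤ D₁₂)
    (π γ ρ : ℝ)
    (hπ : π = (1 - D₁) * (1 - D₂))
    (hγ : γ = (1 - D₁₂) * ((D₁ - D₁₂) * (D₂ - D₁₂) + D₁₂ * D₁ * D₂ - D₁₂ ^ 2))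
    (hρ : ρ = -((Real.sqrt (π * D₁₂ ^ 2 + γ) - Real.sqrt (π * D₁₂ ^ 2)) /
      ((1 - D₁₂) * Real.sqrt (D₁ * D₂)))) :
    -1 < ρ ∧ ρ ≤ 0 := by
  obtain ⟨hD1pos, hD1lt⟩ := h₁
  obtain ⟨hD2pos, hD2lt⟩ := h₂
  have hs : 0 < D₁ + D₂ - D₁ * D₂ := by nlinarith
  have hmul : D₁₂ * (D₁ + D₂ - D₁ * D₂) ≤ D₁ * D₂ := by
    rw [le_div_iff₀ hs] at h₁₂le; linarith
  have h12lt1 : D₁₂ < 1 := by nlinarith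
  have hπpos : 0 < π := by rw [hπ]; nlinarith
  have hγ0 : 0 ≤ γ := by rw [hγ]; nlinarith
  have hDD : 0 < D₁ * D₂ := mul_pos hD1pos hD2pos
  have hsqDD : 0 < Real.sqrt (D₁ * D₂) := Real.sqrt_pos.mpr hDD
  have hsqπ : 0 < Real.sqrt π := Real.sqrt_pos.mpr hπpos
  have hc : 0 < (1 - D₁₂) * Real.sqrt (D₁ * D₂) := mul_pos (by linarith) hsqDD
  have ha : Real.sqrt (π * D₁₂ ^ 2) = Real.sqrt π * D₁₂ := by
    rw [Real.sqrt_mul hπpos.le, Real.sqrt_sq h₁₂pos.le]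
  have hπsq : Real.sqrt π ^ 2 = π := Real.sq_sqrt hπpos.le
  have hDDsq : Real.sqrt (D₁ * D₂) ^ 2 = D₁ * D₂ := Real.sq_sqrt hDD.le
  have hanneg : 0 ≤ π * D₁₂ ^ 2 := by positivity
  have hXnn : 0 ≤ Real.sqrt (π * D₁₂ ^ 2 + γ) - Real.sqrt (π * D₁₂ ^ 2) := by
    have := Real.sqrt_le_sqrt (by linarith : π * D₁₂ ^ 2 ≤ π * D₁₂ ^ 2 + γ)
    linarith
  have key : Real.sqrt (π * D₁₂ ^ 2 + γ) <
      Real.sqrt (π * D₁₂ ^ 2) + (1 - D₁₂) * Real.sqrt (D₁ * D₂) := by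
    have h2 : π * D₁₂ ^ 2 + γ <
        (Real.sqrt (π * D₁₂ ^ 2) + (1 - D₁₂) * Real.sqrt (D₁ * D₂)) ^ 2 := by
      rw [ha]
      have hγle : γ ≤ (1 - D₁₂) ^ 2 * (D₁ * D₂) := by
        have haux : 0 ≤ (1 - D₁₂) * D₁₂ * (D₁ + D₂ - 2 * (D₁ * D₂)) := by
          apply mul_nonneg (mul_nonneg (by linarith) h₁₂pos.le)
          nlinarith
        rw [hγ]; nlinarith [haux]
      have hcross : 0 < 2 * (Real.sqrt π * D₁₂) * ((1 - D₁₂) * Real.sqrt (D₁ * D₂)) := by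
        positivity
      nlinarith [hcross, hγle]
    calc Real.sqrt (π * D₁₂ ^ 2 + γ)
        < Real.sqrt ((Real.sqrt (π * D₁₂ ^ 2) + (1 - D₁₂) * Real.sqrt (D₁ * D₂)) ^ 2) :=
          Real.sqrt_lt_sqrt (by linarith) h2
      _ = Real.sqrt (π * D₁₂ ^ 2) + (1 - D₁₂) * Real.sqrt (D₁ * D₂) :=
          Real.sqrt_sq (by positivity)
  constructor
  · rw [hρ]
    have : (Real.sqrt (π * D₁₂ ^ 2 + γ) - Real.sqrt (π * D₁₂ ^ 2)) /
        ((1 - D₁₂) * Real.sqrt (D₁ * D₂)) < 1 := by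
      rw [div_lt_one hc]; linarith
    linarith
  · rw [hρ]
    have : 0 ≤ (Real.sqrt (π * D₁₂ ^ 2 + γ) - Real.sqrt (π * D₁₂ ^ 2)) /
        ((1 - D₁₂) * Real.sqrt (D₁ * D₂)) := div_nonneg hXnn hc.le
    linarith
end

section
/- Let D₁, D₂ ∈ (0,1), σᵢ² = Dᵢ/(1−Dᵢ) for i = 1,2, and ρ ∈ (−1,1). Then the quantity σ₁²σ₂²(1−ρ²)/(σ₁²σ₂²(1−ρ²) + σ₁² + σ₂² − 2ρσ₁σ₂) is strictly positive and is at most min(D₁, D₂). -/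
theorem joint_distortion_bounds (D₁ D₂ : ℝ) (h₁ : D₁ ∈ Set.Ioo (0:ℝ) 1)
    (h₂ : D₂ ∈ Set.Ioo (0:ℝ) 1) (ρ : ℝ) (hρ : ρ ∈ Set.Ioo (-1:ℝ) 1)
    (σ₁ σ₂ : ℝ) (hσ₁ : 0 < σ₁) (hσ₂ : 0 < σ₂)
    (hσ₁sq : σ₁ ^ 2 = D₁ / (1 - D₁)) (hσ₂sq : σ₂ ^ 2 = D₂ / (1 - D₂)) :
    0 < σ₁ ^ 2 * σ₂ ^ 2 * (1 - ρ ^ 2) /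
        (σ₁ ^ 2 * σ₂ ^ 2 * (1 - ρ ^ 2) + σ₁ ^ 2 + σ₂ ^ 2 - 2 * ρ * σ₁ * σ₂) ∧
    σ₁ ^ 2 * σ₂ ^ 2 * (1 - ρ ^ 2) /
        (σ₁ ^ 2 * σ₂ ^ 2 * (1 - ρ ^ 2) + σ₁ ^ 2 + σ₂ ^ 2 - 2 * ρ * σ₁ * σ₂) ≤ min D₁ D₂ := by
  obtain ⟨hD₁0, hD₁1⟩ := h₁
  obtain ⟨hD₂0, hD₂1⟩ := h₂
  obtain ⟨hρ1, hρ2⟩ := hρ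
  have h1D₁ : (0:ℝ) < 1 - D₁ := by linarith
  have h1D₂ : (0:ℝ) < 1 - D₂ := by linarith
  have hd1 : σ₁ ^ 2 * (1 - D₁) = D₁ := by
    field_simp [ne_of_gt h1D₁] at hσ₁sq; linarith
  have hd2 : σ₂ ^ 2 * (1 - D₂) = D₂ := by
    field_simp [ne_of_gt h1D₂] at hσ₂sq; linarith
  have hρsq : (0:ℝ) < 1 - ρ ^ 2 := by nlinarith
  have hN : (0:ℝ) < σ₁ ^ 2 * σ₂ ^ 2 * (1 - ρ ^ 2) := by positivity
  have hq : (0:ℝ) < σ₁ ^ 2 + σ₂ ^ 2 - 2 * ρ * σ₁ * σ₂ := by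
    nlinarith [sq_nonneg (σ₁ - ρ * σ₂), mul_pos (mul_pos hρsq hσ₂) hσ₂]
  have hden : (0:ℝ) < σ₁ ^ 2 * σ₂ ^ 2 * (1 - ρ ^ 2) + σ₁ ^ 2 + σ₂ ^ 2 - 2 * ρ * σ₁ * σ₂ := by
    linarith
  constructor
  · exact div_pos hN hden
  · rw [le_min_iff]
    constructor
    · rw [div_le_iff₀ hden]
      nlinarith [sq_nonneg (σ₁ - ρ * σ₂), mul_nonneg (sq_nonneg (σ₁ - ρ * σ₂)) hD₁0.le,
        mul_pos (pow_pos hσ₁ 2) (pow_pos hσ₂ 2)]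
    · rw [div_le_iff₀ hden]
      nlinarith [sq_nonneg (σ₂ - ρ * σ₁), mul_nonneg (sq_nonneg (σ₂ - ρ * σ₁)) hD₂0.le,
        mul_pos (pow_pos hσ₁ 2) (pow_pos hσ₂ 2)]
end

section
/- Let D₂, D₃ ∈ (0,1), σ₂² = D₂/(1−D₂), σ₃² = D₃/(1−D₃), and ρ ∈ (−1,1). If ρ ≤ 0, then D₂₃* = σ₂²σ₃²(1−ρ²)/(σ₂²σ₃²(1−ρ²) + σ₂² + σ₃² − 2σ₂σ₃ρ) is monotonically nondecreasing in ρ on (−1, 0]. -/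
theorem D23_monotone (D₂ D₃ : ℝ) (h₂ : D₂ ∈ Set.Ioo (0:ℝ) 1) (h₃ : D₃ ∈ Set.Ioo (0:ℝ) 1)
    (σ₂ σ₃ : ℝ) (hσ₂ : 0 < σ₂) (hσ₃ : 0 < σ₃)
    (hσ₂sq : σ₂ ^ 2 = D₂ / (1 - D₂)) (hσ₃sq : σ₃ ^ 2 = D₃ / (1 - D₃)) :
    MonotoneOn (fun ρ : ℝ =>
      σ₂ ^ 2 * σ₃ ^ 2 * (1 - ρ ^ 2) /
        (σ₂ ^ 2 * σ₃ ^ 2 * (1 - ρ ^ 2) + σ₂ ^ 2 + σ₃ ^ 2 - 2 * σ₂ * σ₃ * ρ))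
      (Set.Ioc (-1 : ℝ) 0) := by
  intro x hx y hy hxy
  obtain ⟨hx1, hx0⟩ := hx
  obtain ⟨hy1, hy0⟩ := hy
  have hab : 0 < σ₂ * σ₃ := mul_pos hσ₂ hσ₃
  have hx2 : x ^ 2 < 1 := by nlinarith
  have hy2 : y ^ 2 < 1 := by nlinarith
  have hdx : 0 < σ₂ ^ 2 * σ₃ ^ 2 * (1 - x ^ 2) + σ₂ ^ 2 + σ₃ ^ 2 - 2 * σ₂ * σ₃ * x := by
    nlinarith [sq_nonneg σ₂, sq_nonneg σ₃, mul_pos (mul_pos hσ₂ hσ₂) (mul_pos hσ₃ hσ₃)]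
  have hdy : 0 < σ₂ ^ 2 * σ₃ ^ 2 * (1 - y ^ 2) + σ₂ ^ 2 + σ₃ ^ 2 - 2 * σ₂ * σ₃ * y := by
    nlinarith [sq_nonneg σ₂, sq_nonneg σ₃, mul_pos (mul_pos hσ₂ hσ₂) (mul_pos hσ₃ hσ₃)]
  simp only
  rw [div_le_div_iff₀ hdx hdy]
  have hxy' : 0 ≤ y - x := by linarith
  have hxynn : 0 ≤ x * y := mul_nonneg_iff.2 (Or.inr ⟨hx0, hy0⟩)
  nlinarith [mul_nonneg (mul_nonneg hxy' hab.le) hxynn,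
    mul_nonneg (mul_nonneg hxy' hab.le) hxynn,
    mul_nonneg hxy' (mul_nonneg (sq_nonneg σ₂) (neg_nonneg.2 hx0)),
    mul_nonneg hxy' (mul_nonneg (sq_nonneg σ₃) (neg_nonneg.2 hx0)),
    mul_nonneg hxy' (mul_nonneg (sq_nonneg σ₂) (neg_nonneg.2 hy0)),
    mul_nonneg hxy' (mul_nonneg (sq_nonneg σ₃) (neg_nonneg.2 hy0)),
    mul_nonneg hxy' hab.le,
    mul_pos (mul_pos hσ₂ hσ₂) (mul_pos hσ₃ hσ₃)]
end
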